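/- arXiv:0809.3288 — 2 statements merged into one kernel-verified Lean document; each statement's English description precedes it below -/
import Mathlib

section
/- Calderón–Zygmund size estimate for the random square-function kernel: There is a constant C = C(N) such that for all x ≠ y in ℝ^N, E_ω Σ_{k∈ℤ} |Δ_k^{D(ω)} δ_y(x)|² ≤ C |x−y|^{−2N}; equivalently, the kernel K(x,y) := {Δ_k^{D(ω)} δ_y(x)}_{k∈ℤ, ω∈Ω}, viewed as an element of L²(ℤ×Ω), satisfies ‖K(x,y)‖ ≤ C' |x−y|^{−N}. -/
open MeasureTheory Filter Topology
open scoped ENNReal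

noncomputable section

namespace Treil

/-- The cube of sidelength `2^k` of the dyadic lattice `t + 𝒟₀` that contains `x`. -/
def dcube {N : ℕ} (t : Fin N → ℝ) (k : ℤ) (x : Fin N → ℝ) : Set (Fin N → ℝ) :=
  {y | ∀ i, ⌊(y i - t i) / (2 : ℝ) ^ k⌋ = ⌊(x i - t i) / (2 : ℝ) ^ k⌋}

/-- The averaging operator `E_k` over the cubes of sidelength `2^k` of the (generalized)
dyadic lattice whose layer at scale `2^k` has offset `c k`. -/
def avg {N : ℕ} (c : ℤ → Fin N → ℝ) (k : ℤ) (f : (Fin N → ℝ) → ℝ) (x : Fin N → ℝ) : ℝ :=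
  (∫ y in dcube (c k) k x, f y) / ((2 : ℝ) ^ k) ^ (N : ℕ)

/-- The martingale difference `Δ_k = E_{k-1} - E_k`. -/
def mdiff {N : ℕ} (c : ℤ → Fin N → ℝ) (k : ℤ) (f : (Fin N → ℝ) → ℝ) (x : Fin N → ℝ) : ℝ :=
  avg c (k - 1) f x - avg c k f x

/-- The square of the dyadic square function, `|S_𝒟 f (x)|² = ∑_k |Δ_k f (x)|²`,
with values in `[0,∞]`. -/
def Ssq {N : ℕ} (c : ℤ → Fin N → ℝ) (f : (Fin N → ℝ) → ℝ) (x : Fin N → ℝ) : ℝ≥0∞ :=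
  ∑' k : ℤ, ENNReal.ofReal ((mdiff c k f x) ^ 2)

/-- The offset (at scale `2^k`) of the random dyadic lattice on `ℝ` built from the uniform
shift `u ∈ [0,1)` and the fair signs `ξ_j`, `j ≥ 1`, encoded as the binary digits of
`v ∈ [0,1)` (`ξ_j = -1` iff `⌊v 2^j⌋` is odd); the interval `I_0 = [u-1, u)` belongs to the
lattice, and `I_k` is obtained from `I_{k-1}` by adjoining the right neighbour if `ξ_k = +1`
and the left neighbour if `ξ_k = -1`. -/
def randOffset1 (u v : ℝ) (k : ℤ) : ℝ :=
  u - 1 - ∑ j ∈ Finset.range k.toNat, (if ⌊v * 2 ^ (j + 1)⌋ % 2 = 1 then (2 : ℝ) ^ j else 0)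

/-- The sample space for the random dyadic lattice in `ℝ^N`: each of the `N` independent
coordinate lattices is driven by a pair (uniform shift, digit-encoded fair signs). -/
abbrev RSpace (N : ℕ) := Fin N → ℝ × ℝ

/-- The probability measure of the random dyadic lattice in `ℝ^N`. -/
def randMeasure (N : ℕ) : Measure (RSpace N) :=
  Measure.pi fun _ =>
    (volume.restrict (Set.Ico (0 : ℝ) 1)).prod (volume.restrict (Set.Ico (0 : ℝ) 1))

/-- The per-scale offsets of the random dyadic lattice `𝒟(ω)` in `ℝ^N`. -/
def randOffset {N : ℕ} (ω : RSpace N) (k : ℤ) : Fin N → ℝ :=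
  fun i => randOffset1 (ω i).1 (ω i).2 k

/-- An (axis-parallel, half-open) cube in `ℝ^N`. -/
def IsPCube {N : ℕ} (Q : Set (Fin N → ℝ)) : Prop :=
  ∃ (a : Fin N → ℝ) (l : ℝ), 0 < l ∧ Q = Set.univ.pi fun i => Set.Ico (a i) (a i + l)

/-- An `H¹`-atom: supported in a cube `Q`, bounded by `|Q|⁻¹`, with zero mean. -/
def IsAtom {N : ℕ} (a : (Fin N → ℝ) → ℝ) : Prop :=
  ∃ Q : Set (Fin N → ℝ), IsPCube Q ∧ (∀ x, x ∉ Q → a x = 0) ∧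
    (∀ x, |a x| ≤ ((volume Q).toReal)⁻¹) ∧ (∫ x, a x) = 0

/-- The atomic `H¹(ℝ^N)` norm: the infimum of `∑ |λ_j|` over all decompositions
`f = ∑ λ_j a_j` converging in `L¹`, with atoms `a_j`. -/
def H1norm {N : ℕ} (f : (Fin N → ℝ) → ℝ) : ℝ≥0∞ :=
  ⨅ (lam : ℕ → ℝ) (a : ℕ → (Fin N → ℝ) → ℝ) (_ : ∀ j, IsAtom (a j))
    (_ : Tendsto (fun m => ∫ x, |f x - ∑ j ∈ Finset.range m, lam j * a j x|) atTop (𝓝 0)),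
    ∑' j, ENNReal.ofReal |lam j|
/-- The martingale difference of the unit point mass `δ_y`:
`Δ_k δ_y (x) = 1_{Q'}(y)/|Q'| - 1_Q(y)/|Q|`, where `Q` is the cube of sidelength `2^k`
containing `x` and `Q'` its child containing `x`. -/
def mdiffDelta {N : ℕ} (c : ℤ → Fin N → ℝ) (k : ℤ) (y x : Fin N → ℝ) : ℝ :=
  (dcube (c (k - 1)) (k - 1) x).indicator (fun _ => (((2 : ℝ) ^ (k - 1)) ^ (N : ℕ))⁻¹) y -
    (dcube (c k) k x).indicator (fun _ => (((2 : ℝ) ^ k) ^ (N : ℕ))⁻¹) y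

/-! The bound holds pointwise for every dyadic lattice, so the expectation plays no role.
`Δ_k δ_y(x)` vanishes unless `y` lies in the cube of sidelength `2^k` containing `x`, which forces
`|x - y|_∞ < 2^k`; and always `|Δ_k δ_y(x)| ≤ (2^N + 1) 2^{-kN}`. Summing this geometric series over
the scales `2^k > |x - y|_∞` gives `∑_k |Δ_k δ_y(x)|² ≤ 2 (2^N + 1)² |x - y|_∞^{-2N}`. -/

lemma dist_lt_of_mem_dcube {N : ℕ} {t : Fin N → ℝ} {k : ℤ} {x y : Fin N → ℝ}
    (hy : y ∈ dcube t k x) : dist x y < 2 ^ k := by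
  have hk : (0 : ℝ) < 2 ^ k := by positivity
  refine (dist_pi_lt_iff hk).2 fun i => ?_
  have h := Int.abs_sub_lt_one_of_floor_eq_floor (hy i).symm
  rwa [← sub_div, sub_sub_sub_cancel_right, abs_div, abs_of_pos hk, div_lt_one hk] at h

lemma mdiffDelta_eq_zero_of_zpow_le_dist {N : ℕ} (c : ℤ → Fin N → ℝ) {k : ℤ}
    {x y : Fin N → ℝ} (h : (2 : ℝ) ^ k ≤ dist x y) : mdiffDelta c k y x = 0 := by
  have h' : (2 : ℝ) ^ (k - 1) ≤ dist x y := (zpow_le_zpow_right₀ one_le_two (by omega)).trans h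
  rw [mdiffDelta, Set.indicator_of_notMem fun hy => (dist_lt_of_mem_dcube hy).not_ge h',
    Set.indicator_of_notMem fun hy => (dist_lt_of_mem_dcube hy).not_ge h, sub_zero]

lemma abs_indicator_const_le {α : Type*} (s : Set α) {a : ℝ} (ha : 0 ≤ a) (y : α) :
    |s.indicator (fun _ => a) y| ≤ a := by
  by_cases hy : y ∈ s <;> simp [hy, ha, abs_of_nonneg]

lemma abs_mdiffDelta_le {N : ℕ} (c : ℤ → Fin N → ℝ) (k : ℤ) (x y : Fin N → ℝ) :
    |mdiffDelta c k y x| ≤ (2 ^ N + 1) * ((2 ^ k) ^ N)⁻¹ := by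
  have hchild : (((2 : ℝ) ^ (k - 1)) ^ N)⁻¹ = 2 ^ N * ((2 ^ k) ^ N)⁻¹ := by
    rw [zpow_sub_one₀ two_ne_zero, mul_pow, inv_pow, mul_inv, inv_inv, mul_comm]
  calc |mdiffDelta c k y x|
      ≤ (((2 : ℝ) ^ (k - 1)) ^ N)⁻¹ + ((2 ^ k) ^ N)⁻¹ :=
        (abs_sub _ _).trans (add_le_add (abs_indicator_const_le _ (by positivity) _)
          (abs_indicator_const_le _ (by positivity) _))
    _ = (2 ^ N + 1) * ((2 ^ k) ^ N)⁻¹ := by rw [hchild]; ring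

lemma tsum_int_le_of_le_geometric {f : ℤ → ℝ≥0∞} {k₀ : ℤ} {a r : ℝ≥0∞}
    (hzero : ∀ k < k₀, f k = 0) (hle : ∀ n : ℕ, f (k₀ + n) ≤ a * r ^ n) :
    ∑' k, f k ≤ a * (1 - r)⁻¹ := by
  have hinj : Function.Injective fun n : ℕ => k₀ + n := fun m n h => by simpa using h
  have hsupp : Function.support f ⊆ Set.range fun n : ℕ => k₀ + n := fun k hk =>
    ⟨(k - k₀).toNat, show k₀ + ((k - k₀).toNat : ℤ) = k by
      have := not_lt.1 (mt (hzero k) hk); omega⟩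
  calc ∑' k, f k = ∑' n : ℕ, f (k₀ + n) := (hinj.tsum_eq hsupp).symm
    _ ≤ ∑' n : ℕ, a * r ^ n := ENNReal.tsum_le_tsum hle
    _ = a * (1 - r)⁻¹ := by rw [ENNReal.tsum_mul_left, ENNReal.tsum_geometric]

lemma ofReal_inv_two_pow_sq_le_inv_two {N : ℕ} (hN : N ≠ 0) :
    ENNReal.ofReal ((((2 : ℝ) ^ N)⁻¹) ^ 2) ≤ 2⁻¹ := by
  have h2 : (2 : ℝ) ≤ 2 ^ N := le_self_pow₀ one_le_two hN
  calc ENNReal.ofReal ((((2 : ℝ) ^ N)⁻¹) ^ 2) ≤ ENNReal.ofReal 2⁻¹ := ENNReal.ofReal_le_ofReal <|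
        (pow_le_of_le_one (by positivity) (inv_le_one_of_one_le₀ (one_le_two.trans h2))
          two_ne_zero).trans (inv_anti₀ two_pos h2)
    _ = 2⁻¹ := by rw [ENNReal.ofReal_inv_of_pos two_pos, ENNReal.ofReal_ofNat]

lemma tsum_mdiffDelta_sq_le {N : ℕ} (hN : N ≠ 0) (c : ℤ → Fin N → ℝ) {x y : Fin N → ℝ}
    {k₀ : ℤ} (hk₀ : ∀ k < k₀, (2 : ℝ) ^ k ≤ dist x y) :
    ∑' k : ℤ, ENNReal.ofReal (mdiffDelta c k y x ^ 2) ≤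
      ENNReal.ofReal (2 * (2 ^ N + 1) ^ 2 * (((2 ^ k₀) ^ N)⁻¹) ^ 2) := by
  set A : ℝ := (2 ^ N + 1) ^ 2 * (((2 ^ k₀) ^ N)⁻¹) ^ 2
  set r : ℝ := (((2 : ℝ) ^ N)⁻¹) ^ 2
  have hzero (k : ℤ) (hk : k < k₀) : ENNReal.ofReal (mdiffDelta c k y x ^ 2) = 0 := by
    simp [mdiffDelta_eq_zero_of_zpow_le_dist c (hk₀ k hk)]
  have hle (n : ℕ) : ENNReal.ofReal (mdiffDelta c (k₀ + n) y x ^ 2) ≤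
      ENNReal.ofReal A * ENNReal.ofReal r ^ n := by
    have hΔ := abs_le.1 (abs_mdiffDelta_le c (k₀ + n) x y)
    rw [← ENNReal.ofReal_pow (by positivity), ← ENNReal.ofReal_mul (by positivity)]
    refine ENNReal.ofReal_le_ofReal ((sq_le_sq' hΔ.1 hΔ.2).trans_eq ?_)
    rw [zpow_add₀ two_ne_zero, zpow_natCast]
    ring
  have hgeom : (1 - ENNReal.ofReal r)⁻¹ ≤ 2 := by
    have := ENNReal.inv_le_inv.2 (tsub_le_tsub_left (ofReal_inv_two_pow_sq_le_inv_two hN) 1)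
    rwa [ENNReal.one_sub_inv_two, inv_inv] at this
  calc ∑' k : ℤ, ENNReal.ofReal (mdiffDelta c k y x ^ 2)
      ≤ ENNReal.ofReal A * (1 - ENNReal.ofReal r)⁻¹ := tsum_int_le_of_le_geometric hzero hle
    _ ≤ ENNReal.ofReal A * 2 := by gcongr
    _ = ENNReal.ofReal (2 * A) := by rw [ENNReal.ofReal_mul zero_le_two, mul_comm]; simp
    _ = ENNReal.ofReal (2 * (2 ^ N + 1) ^ 2 * (((2 ^ k₀) ^ N)⁻¹) ^ 2) := by rw [mul_assoc]

theorem tsum_mdiffDelta_sq_le_div_dist_pow {N : ℕ} (c : ℤ → Fin N → ℝ) {x y : Fin N → ℝ}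
    (hxy : x ≠ y) :
    ∑' k : ℤ, ENNReal.ofReal (mdiffDelta c k y x ^ 2) ≤
      ENNReal.ofReal (2 * (2 ^ N + 1) ^ 2 / dist x y ^ (2 * N)) := by
  -- `x ≠ y` forces `Fin N` to be nonempty
  obtain ⟨i, -⟩ := Function.ne_iff.1 hxy
  have hd : 0 < dist x y := dist_pos.2 hxy
  set k₀ := Int.log 2 (dist x y) + 1
  have hlog : (2 : ℝ) ^ Int.log 2 (dist x y) ≤ dist x y := by
    simpa using Int.zpow_log_le_self (R := ℝ) one_lt_two hd
  have hlt : dist x y < 2 ^ k₀ := by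
    simpa using Int.lt_zpow_succ_log_self (R := ℝ) one_lt_two (dist x y)
  have hinv : (((2 : ℝ) ^ k₀) ^ N)⁻¹ ^ 2 ≤ (dist x y ^ (2 * N))⁻¹ := by
    rw [inv_pow, ← pow_mul, mul_comm N]
    exact inv_anti₀ (by positivity) (pow_le_pow_left₀ hd.le hlt.le _)
  refine (tsum_mdiffDelta_sq_le (Fin.pos i).ne' c (k₀ := k₀)
    fun k hk => (zpow_le_zpow_right₀ one_le_two (by omega)).trans hlog).trans ?_
  rw [div_eq_mul_inv]
  gcongr

instance : IsProbabilityMeasure (volume.restrict (Set.Ico (0 : ℝ) 1)) :=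
  ⟨by simp⟩

instance (N : ℕ) : IsProbabilityMeasure (randMeasure N) := by
  unfold randMeasure; infer_instance

theorem kernel_size_general (N : ℕ) :
    ∃ C : ℝ, 0 < C ∧
      ∀ x y : Fin N → ℝ, x ≠ y →
        (∫⁻ ω, (∑' k : ℤ, ENNReal.ofReal ((mdiffDelta (randOffset ω) k y x) ^ 2))
            ∂randMeasure N) ≤
          ENNReal.ofReal (C / dist x y ^ (2 * N)) := by
  refine ⟨2 * (2 ^ N + 1) ^ 2, by positivity, fun x y hxy => ?_⟩
  calc _ ≤ ∫⁻ _, ENNReal.ofReal (2 * (2 ^ N + 1) ^ 2 / dist x y ^ (2 * N)) ∂randMeasure N :=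
        lintegral_mono fun ω => tsum_mdiffDelta_sq_le_div_dist_pow (randOffset ω) hxy
    _ = _ := by rw [lintegral_const, measure_univ, mul_one]

/-- **Calderón–Zygmund size estimate for the random square-function kernel**:
`𝔼_ω ∑_k |Δ_k^{𝒟(ω)} δ_y(x)|² ≤ C(N) |x-y|^{-2N}`. -/
theorem kernel_size (N : ℕ) (hN : 0 < N) :
    ∃ C : ℝ, 0 < C ∧
      ∀ x y : Fin N → ℝ, x ≠ y →
        (∫⁻ ω, (∑' k : ℤ, ENNReal.ofReal ((mdiffDelta (randOffset ω) k y x) ^ 2))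
            ∂randMeasure N) ≤
          ENNReal.ofReal (C / dist x y ^ (2 * N)) :=
  kernel_size_general N

end Treil
end
end

section
/- Equivalence of the two dyadic square-function norms: There is a constant C depending only on N such that for every dyadic lattice D in ℝ^N and every f ∈ L¹_loc(ℝ^N), C^{−1} ‖S_D f‖_{L¹} ≤ ‖S̃_D f‖_{L¹} ≤ C ‖S_D f‖_{L¹}. -/
open MeasureTheory Filter Topology
open scoped ENNReal

noncomputable section

namespace Treil

/-- The square of the square function `S̃_𝒟`, `|S̃_𝒟 f (x)|² = ∑_k (E_k |Δ_k f|²)(x)`. -/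
def StildeSq {N : ℕ} (c : ℤ → Fin N → ℝ) (f : (Fin N → ℝ) → ℝ) (x : Fin N → ℝ) : ℝ≥0∞ :=
  ∑' k : ℤ, ENNReal.ofReal (avg c k (fun y => (mdiff c k f y) ^ 2) x)


/-!
`Δ_k f` is constant on the cubes of generation `k - 1`, each of which has `2^{-N}` times the
volume of its parent, so `|Δ_k f|² ≤ 2^N E_k |Δ_k f|²` and `S f ≤ 2^{N/2} S̃ f` pointwise.

Conversely, split `|Δ_k f|²` according to the dyadic level `2^j < T_k^{1/2} ≤ 2^{j+1}` of its
tail `T_k = ∑_{l ≥ k} |Δ_l f|²`, which is again constant on the cubes of generation `k - 1`.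
The `j`-th piece `U_j = ∑_k E_k (|Δ_k f|² 1_{level j})` satisfies `∫ U_j ≤ 4^{j+1} |{S f > 2^j}|`,
because at each point the terms of level `j` are dominated by a single tail. It vanishes off the
union of the cubes meeting the level sets; the maximal such cubes are disjoint and each has a
child inside `{S f > 2^j}`, so that union has measure at most `2^N |{S f > 2^j}|`. With
`√u ≤ a + u / a` for `a = 2^j` this gives `∫ U_j^{1/2} ≲ 2^j |{S f > 2^j}|`, and summing over `j`
(`S̃ f ≤ ∑_j U_j^{1/2}`) yields `‖S̃ f‖₁ ≲ ‖S f‖₁`.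
-/

open Set

section ENNRealLemmas

lemma rpow_half_mul_self (u : ℝ≥0∞) : u ^ (1 / 2 : ℝ) * u ^ (1 / 2 : ℝ) = u := by
  rw [← ENNReal.rpow_add_of_nonneg _ _ (by norm_num) (by norm_num)]
  norm_num

lemma rpow_half_le_iff {a u : ℝ≥0∞} : u ^ (1 / 2 : ℝ) ≤ a ↔ u ≤ a ^ 2 := by
  rw [one_div, ENNReal.rpow_inv_le_iff two_pos, ENNReal.rpow_two]

lemma rpow_half_tsum_le {ι : Type*} (u : ι → ℝ≥0∞) :
    (∑' i, u i) ^ (1 / 2 : ℝ) ≤ ∑' i, u i ^ (1 / 2 : ℝ) := by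
  rw [rpow_half_le_iff, sq]
  calc ∑' i, u i = ∑' i, u i ^ (1 / 2 : ℝ) * u i ^ (1 / 2 : ℝ) := by
        simp only [rpow_half_mul_self]
    _ ≤ ∑' i, u i ^ (1 / 2 : ℝ) * ∑' i, u i ^ (1 / 2 : ℝ) :=
        ENNReal.tsum_le_tsum fun i => mul_le_mul_right (ENNReal.le_tsum i) _
    _ = _ := ENNReal.tsum_mul_right

lemma rpow_half_le_add_div (u : ℝ≥0∞) {a : ℝ≥0∞} (ha : a ≠ 0) (ha' : a ≠ ∞) :
    u ^ (1 / 2 : ℝ) ≤ a + u / a := by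
  rcases le_or_gt (u ^ (1 / 2 : ℝ)) a with h | h
  · exact h.trans le_self_add
  · refine le_add_left ?_
    rw [ENNReal.le_div_iff_mul_le (Or.inl ha) (Or.inl ha')]
    calc u ^ (1 / 2 : ℝ) * a ≤ u ^ (1 / 2 : ℝ) * u ^ (1 / 2 : ℝ) := mul_le_mul_right h.le _
      _ = u := rpow_half_mul_self u

lemma two_zpow_lt_two_zpow_iff {i j : ℤ} : (2 : ℝ≥0∞) ^ i < 2 ^ j ↔ i < j := by
  refine ⟨fun h => ?_, fun h => ?_⟩
  · by_contra hji
    exact (ENNReal.zpow_le_of_le one_le_two (not_lt.mp hji)).not_gt h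
  · calc (2 : ℝ≥0∞) ^ i < 2 ^ i + 2 ^ i :=
          ENNReal.lt_add_right (ENNReal.zpow_ne_top two_ne_zero ENNReal.ofNat_ne_top i)
            (ENNReal.zpow_pos two_ne_zero ENNReal.ofNat_ne_top i).ne'
      _ = 2 ^ (i + 1) := by
          rw [ENNReal.zpow_add two_ne_zero ENNReal.ofNat_ne_top, zpow_one, mul_two]
      _ ≤ 2 ^ j := ENNReal.zpow_le_of_le one_le_two h

lemma eq_of_mem_Ioc_two_zpow {x : ℝ≥0∞} {i j : ℤ} (hi : x ∈ Ioc ((2 : ℝ≥0∞) ^ i) (2 ^ (i + 1)))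
    (hj : x ∈ Ioc ((2 : ℝ≥0∞) ^ j) (2 ^ (j + 1))) : i = j := by
  have h₁ := two_zpow_lt_two_zpow_iff.mp (hi.1.trans_le hj.2)
  have h₂ := two_zpow_lt_two_zpow_iff.mp (hj.1.trans_le hi.2)
  omega

lemma tsum_indicator_le_of_tail_le {g : ℤ → ℝ≥0∞} {K : Set ℤ} {c : ℝ≥0∞}
    (h : ∀ k ∈ K, ∑' l, (Ici k).indicator g l ≤ c) : ∑' l, K.indicator g l ≤ c := by
  classical
  rw [ENNReal.tsum_eq_iSup_sum]
  refine iSup_le fun F => ?_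
  set FK := F.filter (· ∈ K)
  rcases FK.eq_empty_or_nonempty with hF | hF
  · rw [Finset.sum_eq_zero fun l hl =>
      indicator_of_notMem (Finset.filter_eq_empty_iff.mp hF hl) g]
    exact zero_le
  · calc ∑ l ∈ F, K.indicator g l ≤ ∑ l ∈ F, (Ici (FK.min' hF)).indicator g l := by
          refine Finset.sum_le_sum fun l hl => ?_
          by_cases hlK : l ∈ K
          · rw [indicator_of_mem hlK, indicator_of_mem]
            exact FK.min'_le l (Finset.mem_filter.mpr ⟨hl, hlK⟩)
          · rw [indicator_of_notMem hlK]
            exact zero_le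
      _ ≤ ∑' l, (Ici (FK.min' hF)).indicator g l := ENNReal.sum_le_tsum F
      _ ≤ c := h _ (Finset.mem_filter.mp (FK.min'_mem hF)).2

lemma tsum_two_zpow_lt_le (a : ℝ≥0∞) :
    ∑' j : ℤ, (if (2 : ℝ≥0∞) ^ j < a then 2 ^ j else 0) ≤ 2 * a := by
  rcases eq_or_ne a ∞ with rfl | ha
  · simp
  rcases eq_or_ne a 0 with rfl | ha₀
  · simp
  obtain ⟨j₀, hj₀, ha_le⟩ :=
    ENNReal.exists_mem_Ioc_zpow ha₀ ha ENNReal.one_lt_two ENNReal.ofNat_ne_top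
  have hsupp : Function.support (fun j : ℤ => if (2 : ℝ≥0∞) ^ j < a then (2 : ℝ≥0∞) ^ j else 0) ⊆
      range fun n : ℕ => j₀ - n := by
    intro j hj
    have hlt : (2 : ℝ≥0∞) ^ j < a := by_contra fun h => hj (if_neg h)
    have : j < j₀ + 1 := two_zpow_lt_two_zpow_iff.mp (hlt.trans_le ha_le)
    exact ⟨(j₀ - j).toNat, by dsimp only; omega⟩
  rw [← (sub_right_injective.comp Nat.cast_injective :
    Function.Injective fun n : ℕ => j₀ - n).tsum_eq hsupp]
  calc ∑' n : ℕ, (if (2 : ℝ≥0∞) ^ (j₀ - n) < a then 2 ^ (j₀ - n) else 0)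
      ≤ ∑' n : ℕ, (2 : ℝ≥0∞) ^ j₀ * 2⁻¹ ^ n := by
        refine ENNReal.tsum_le_tsum fun n => ?_
        rw [ENNReal.zpow_sub two_ne_zero ENNReal.ofNat_ne_top, zpow_natCast, ← ENNReal.inv_pow]
        split_ifs
        exacts [le_rfl, zero_le]
    _ = (2 : ℝ≥0∞) ^ j₀ * 2 := by
        rw [ENNReal.tsum_mul_left, ENNReal.tsum_geometric, ENNReal.one_sub_inv_two, inv_inv]
    _ ≤ 2 * a := by rw [mul_comm]; exact mul_le_mul_right hj₀.le 2

end ENNRealLemmas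

section LebesgueLemmas

variable {α : Type*} [MeasurableSpace α]

lemma laverage_tsum {ι : Type*} [Countable ι] {μ : Measure α} {g : ι → α → ℝ≥0∞}
    (hg : ∀ i, AEMeasurable (g i) μ) : ⨍⁻ x, ∑' i, g i x ∂μ = ∑' i, ⨍⁻ x, g i x ∂μ := by
  simp only [laverage_eq']
  exact lintegral_tsum fun i => (hg i).smul_measure _

lemma tsum_two_zpow_mul_measure_lt_le (μ : Measure α) {F : α → ℝ≥0∞} (hF : Measurable F) :
    ∑' j : ℤ, 2 ^ j * μ {x | (2 : ℝ≥0∞) ^ j < F x} ≤ 2 * ∫⁻ x, F x ∂μ := by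
  have hmeas : ∀ j : ℤ, MeasurableSet {x | (2 : ℝ≥0∞) ^ j < F x} := fun j => hF measurableSet_Ioi
  calc ∑' j : ℤ, 2 ^ j * μ {x | (2 : ℝ≥0∞) ^ j < F x}
      = ∑' j : ℤ, ∫⁻ x, {x | (2 : ℝ≥0∞) ^ j < F x}.indicator (fun _ => 2 ^ j) x ∂μ :=
        tsum_congr fun j => (lintegral_indicator_const (hmeas j) _).symm
    _ = ∫⁻ x, ∑' j : ℤ, {x | (2 : ℝ≥0∞) ^ j < F x}.indicator (fun _ => 2 ^ j) x ∂μ :=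
        (lintegral_tsum fun j => (measurable_const.indicator (hmeas j)).aemeasurable).symm
    _ ≤ ∫⁻ x, 2 * F x ∂μ := lintegral_mono fun x => by
        simpa only [indicator_apply, mem_ofPred_eq] using tsum_two_zpow_lt_le (F x)
    _ = 2 * ∫⁻ x, F x ∂μ := lintegral_const_mul 2 hF

end LebesgueLemmas

section DyadicGrid

variable {N : ℕ} (t : Fin N → ℝ)

def dyadicIndex (k : ℤ) (x : Fin N → ℝ) : Fin N → ℤ :=
  fun i => ⌊(x i - t i) / (2 : ℝ) ^ k⌋

def dyadicCorner (k : ℤ) (v : Fin N → ℤ) : Fin N → ℝ :=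
  fun i => t i + (2 : ℝ) ^ k * v i

variable {t}

lemma mem_dcube_iff {k : ℤ} {x y : Fin N → ℝ} :
    y ∈ dcube t k x ↔ dyadicIndex t k y = dyadicIndex t k x := by
  simp only [dcube, mem_ofPred_eq, dyadicIndex, funext_iff]

lemma mem_dcube_comm {k : ℤ} {x y : Fin N → ℝ} : y ∈ dcube t k x ↔ x ∈ dcube t k y := by
  rw [mem_dcube_iff, mem_dcube_iff, eq_comm]

lemma dcube_eq_of_mem {k : ℤ} {x y : Fin N → ℝ} (h : y ∈ dcube t k x) :
    dcube t k y = dcube t k x :=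
  Set.ext fun z => by rw [mem_dcube_iff, mem_dcube_iff, mem_dcube_iff.mp h]

lemma dyadicIndex_dyadicCorner (k : ℤ) (v : Fin N → ℤ) :
    dyadicIndex t k (dyadicCorner t k v) = v := by
  funext i
  simp only [dyadicIndex, dyadicCorner]
  rw [add_sub_cancel_left, mul_div_cancel_left₀ _ (zpow_ne_zero k two_ne_zero), Int.floor_intCast]

lemma dyadicIndex_apply_of_le {k k' : ℤ} (h : k ≤ k') (x : Fin N → ℝ) (i : Fin N) :
    dyadicIndex t k' x i = dyadicIndex t k x i / 2 ^ (k' - k).toNat := by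
  have hscale : (2 : ℝ) ^ k' = 2 ^ k * ((2 ^ (k' - k).toNat : ℕ) : ℝ) := by
    rw [Nat.cast_pow, Nat.cast_ofNat, ← zpow_natCast, ← zpow_add₀ two_ne_zero]
    congr 1
    omega
  simp only [dyadicIndex, hscale, ← div_div, Int.floor_div_natCast]
  norm_num

lemma dyadicIndex_eq_of_le {k k' : ℤ} (h : k ≤ k') {x y : Fin N → ℝ}
    (hxy : dyadicIndex t k y = dyadicIndex t k x) : dyadicIndex t k' y = dyadicIndex t k' x :=
  funext fun i => by rw [dyadicIndex_apply_of_le h, dyadicIndex_apply_of_le h, hxy]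

lemma dcube_subset_dcube {k k' : ℤ} (h : k ≤ k') (x : Fin N → ℝ) :
    dcube t k x ⊆ dcube t k' x :=
  fun _ hy => mem_dcube_iff.mpr (dyadicIndex_eq_of_le h (mem_dcube_iff.mp hy))

lemma dyadicIndex_image_dcube_finite (k : ℤ) (x : Fin N → ℝ) :
    (dyadicIndex t (k - 1) '' dcube t k x).Finite := by
  refine (Set.Finite.pi fun i => Set.finite_Icc (2 * dyadicIndex t k x i)
    (2 * dyadicIndex t k x i + 1)).subset ?_
  rintro _ ⟨y, hy, rfl⟩ i -
  have hdiv := dyadicIndex_apply_of_le (t := t) (show k - 1 ≤ k by omega) y i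
  rw [mem_dcube_iff.mp hy, show (k - (k - 1)).toNat = 1 by omega, pow_one] at hdiv
  constructor <;> omega

lemma dcube_eq_pi (k : ℤ) (x : Fin N → ℝ) :
    dcube t k x = univ.pi fun i =>
      Ico (t i + 2 ^ k * dyadicIndex t k x i) (t i + 2 ^ k * (dyadicIndex t k x i + 1)) := by
  have hpos : (0 : ℝ) < 2 ^ k := by positivity
  ext y
  simp only [dcube, mem_ofPred_eq, Set.mem_pi, mem_univ, true_implies, mem_Ico]
  refine forall_congr' fun i => ?_
  rw [Int.floor_eq_iff, le_div_iff₀ hpos, div_lt_iff₀ hpos]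
  change (dyadicIndex t k x i : ℝ) * 2 ^ k ≤ _ ∧ _ < ((dyadicIndex t k x i : ℝ) + 1) * 2 ^ k ↔ _
  constructor <;> rintro ⟨h₁, h₂⟩ <;> constructor <;> linarith

lemma measurableSet_dcube (k : ℤ) (x : Fin N → ℝ) : MeasurableSet (dcube t k x) := by
  rw [dcube_eq_pi]
  exact MeasurableSet.univ_pi fun _ => measurableSet_Ico

lemma volume_dcube (k : ℤ) (x : Fin N → ℝ) :
    volume (dcube t k x) = ENNReal.ofReal (((2 : ℝ) ^ k) ^ N) := by
  simp only [dcube_eq_pi, volume_pi_pi, Real.volume_Ico, add_sub_add_left_eq_sub, ← mul_sub,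
    add_sub_cancel_left, mul_one, Finset.prod_const, Finset.card_univ, Fintype.card_fin]
  rw [ENNReal.ofReal_pow (by positivity)]

lemma volume_dcube_eq_two_pow_mul (k : ℤ) (x y : Fin N → ℝ) :
    volume (dcube t k x) = 2 ^ N * volume (dcube t (k - 1) y) := by
  rw [volume_dcube, volume_dcube, ← ENNReal.ofReal_ofNat, ← ENNReal.ofReal_pow zero_le_two,
    ← ENNReal.ofReal_mul (by positivity), ← mul_pow, ← zpow_one_add₀ two_ne_zero, add_sub_cancel]

lemma volume_dcube_ne_zero (k : ℤ) (x : Fin N → ℝ) : volume (dcube t k x) ≠ 0 := by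
  rw [volume_dcube]
  exact (ENNReal.ofReal_pos.mpr (by positivity)).ne'

lemma volume_dcube_ne_top (k : ℤ) (x : Fin N → ℝ) : volume (dcube t k x) ≠ ∞ := by
  rw [volume_dcube]
  exact ENNReal.ofReal_ne_top

lemma bddAbove_setOf_volume_dcube_le (hN : 0 < N) (x : Fin N → ℝ) {V : ℝ≥0∞} (hV : V ≠ ∞) :
    BddAbove {k : ℤ | volume (dcube t k x) ≤ V} := by
  obtain ⟨n, hn⟩ := pow_unbounded_of_one_lt V.toReal one_lt_two
  refine ⟨n, fun k hk => not_lt.mp fun hnk => ?_⟩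
  rw [mem_ofPred_eq, volume_dcube, ENNReal.ofReal_le_iff_le_toReal hV] at hk
  have h2k : (2 : ℝ) ^ (n : ℤ) ≤ 2 ^ k := zpow_le_zpow_right₀ one_le_two hnk.le
  rw [zpow_natCast] at h2k
  have := le_self_pow₀ ((one_le_pow₀ one_le_two).trans h2k) hN.ne'
  linarith

lemma measurable_dyadicIndex (k : ℤ) : Measurable (dyadicIndex t k) :=
  measurable_pi_lambda _ fun i =>
    Int.measurable_floor.comp (((measurable_pi_apply i).sub measurable_const).div_const _)

lemma eq_comp_dyadicIndex {β : Type*} {k : ℤ} {φ : (Fin N → ℝ) → β}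
    (hφ : ∀ x, ∀ y ∈ dcube t k x, φ y = φ x) : φ = (φ ∘ dyadicCorner t k) ∘ dyadicIndex t k :=
  funext fun x => (hφ x _ (mem_dcube_iff.mpr (dyadicIndex_dyadicCorner k _))).symm

lemma measurable_of_forall_mem_dcube {β : Type*} [MeasurableSpace β] {k : ℤ}
    {φ : (Fin N → ℝ) → β} (hφ : ∀ x, ∀ y ∈ dcube t k x, φ y = φ x) : Measurable φ := by
  rw [eq_comp_dyadicIndex hφ]
  exact Measurable.of_discrete.comp (measurable_dyadicIndex k)

lemma measurableSet_of_forall_mem_dcube {k : ℤ} {S : Set (Fin N → ℝ)}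
    (hS : ∀ x ∈ S, dcube t k x ⊆ S) : MeasurableSet S :=
  measurableSet_setOfPred.mpr <| measurable_of_forall_mem_dcube fun x y hy =>
    propext ⟨fun hyS => hS y hyS (mem_dcube_comm.mp hy), fun hxS => hS x hxS hy⟩

lemma finite_image_dcube {β : Type*} {k : ℤ} {φ : (Fin N → ℝ) → β}
    (hφ : ∀ x, ∀ y ∈ dcube t (k - 1) x, φ y = φ x) (x : Fin N → ℝ) :
    (φ '' dcube t k x).Finite := by
  rw [eq_comp_dyadicIndex hφ, image_comp]
  exact (dyadicIndex_image_dcube_finite k x).image _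

end DyadicGrid

section DyadicPartition

variable {N : ℕ} {t : Fin N → ℝ}

lemma dcube_eq_preimage (k : ℤ) (x : Fin N → ℝ) :
    dcube t k x = dyadicIndex t k ⁻¹' {dyadicIndex t k x} :=
  Set.ext fun _ => mem_dcube_iff

lemma preimage_dyadicIndex_eq_dcube (k : ℤ) (v : Fin N → ℤ) :
    dyadicIndex t k ⁻¹' {v} = dcube t k (dyadicCorner t k v) := by
  rw [dcube_eq_preimage, dyadicIndex_dyadicCorner]

lemma measure_eq_tsum_inter_dyadicIndex (μ : Measure (Fin N → ℝ)) (k : ℤ) (E : Set (Fin N → ℝ)) :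
    μ E = ∑' v, μ (E ∩ dyadicIndex t k ⁻¹' {v}) := by
  have hmeas : ∀ v, MeasurableSet (dyadicIndex t k ⁻¹' {v}) :=
    fun v => measurable_dyadicIndex k (measurableSet_singleton v)
  rw [← Measure.restrict_apply_univ, ← preimage_univ (f := dyadicIndex t k),
    ← iUnion_of_singleton, preimage_iUnion, measure_iUnion (pairwise_disjoint_fiber _) hmeas]
  simp only [Measure.restrict_apply (hmeas _), inter_comm]

lemma lintegral_eq_tsum_setLIntegral_dyadicIndex (μ : Measure (Fin N → ℝ)) (k : ℤ)
    (F : (Fin N → ℝ) → ℝ≥0∞) : ∫⁻ x, F x ∂μ = ∑' v, ∫⁻ x in dyadicIndex t k ⁻¹' {v}, F x ∂μ := by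
  rw [← lintegral_iUnion (fun v => measurable_dyadicIndex k (measurableSet_singleton v))
    (pairwise_disjoint_fiber _), ← preimage_iUnion, iUnion_of_singleton, preimage_univ,
    setLIntegral_univ]

lemma lintegral_setLAverage_dcube (k : ℤ) (h : (Fin N → ℝ) → ℝ≥0∞) :
    ∫⁻ x, ⨍⁻ y in dcube t k x, h y ∂volume = ∫⁻ y, h y := by
  rw [lintegral_eq_tsum_setLIntegral_dyadicIndex volume k,
    lintegral_eq_tsum_setLIntegral_dyadicIndex volume k]
  refine tsum_congr fun v => ?_
  rw [preimage_dyadicIndex_eq_dcube]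
  set Q := dcube t k (dyadicCorner t k v)
  calc ∫⁻ x in Q, ⨍⁻ y in dcube t k x, h y ∂volume = ∫⁻ _ in Q, ⨍⁻ y in Q, h y ∂volume :=
        setLIntegral_congr_fun (measurableSet_dcube k _) fun x hx => by rw [dcube_eq_of_mem hx]
    _ = ∫⁻ y in Q, h y := by
        rw [setLIntegral_const, setLAverage_eq,
          ENNReal.div_mul_cancel (volume_dcube_ne_zero k _) (volume_dcube_ne_top k _)]

lemma measurable_setLAverage_dcube (k : ℤ) (h : (Fin N → ℝ) → ℝ≥0∞) :
    Measurable fun x => ⨍⁻ y in dcube t k x, h y ∂volume :=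
  measurable_of_forall_mem_dcube fun x y hy => by rw [dcube_eq_of_mem hy]

lemma volume_le_mul_volume_inter_of_forall_dcube {k : ℤ} {E A : Set (Fin N → ℝ)} {C : ℝ≥0∞}
    (hE : ∀ x ∈ E, dcube t k x ⊆ E)
    (hEA : ∀ x ∈ E, volume (dcube t k x) ≤ C * volume (A ∩ dcube t k x)) :
    volume E ≤ C * volume (A ∩ E) := by
  rw [measure_eq_tsum_inter_dyadicIndex volume k E,
    measure_eq_tsum_inter_dyadicIndex volume k (A ∩ E), ← ENNReal.tsum_mul_left]
  refine ENNReal.tsum_le_tsum fun v => ?_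
  rcases (E ∩ dyadicIndex t k ⁻¹' {v}).eq_empty_or_nonempty with h | ⟨x, hxE, rfl⟩
  · rw [h, measure_empty]
    exact zero_le
  · rw [← dcube_eq_preimage, inter_eq_right.mpr (hE x hxE), inter_assoc,
      inter_eq_right.mpr (hE x hxE)]
    exact hEA x hxE

lemma volume_iUnion_le_of_forall_dcube (hN : 0 < N) {S : ℤ → Set (Fin N → ℝ)}
    {A : Set (Fin N → ℝ)} {C : ℝ≥0∞} (hC : C ≠ ∞) (hA : volume A ≠ ∞)
    (hS : ∀ k, ∀ x ∈ S k, dcube t k x ⊆ S k)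
    (hSA : ∀ k, ∀ x ∈ S k, volume (dcube t k x) ≤ C * volume (A ∩ dcube t k x)) :
    volume (⋃ k, S k) ≤ C * volume A := by
  have hbdd : ∀ x, BddAbove {k | x ∈ S k} := fun x =>
    (bddAbove_setOf_volume_dcube_le hN x (ENNReal.mul_ne_top hC hA)).mono fun k hk =>
      (hSA k x hk).trans (mul_le_mul_right (measure_mono inter_subset_left) C)
  -- `M k` is the union of the maximal cubes of scale `k`: `k` is the largest scale with `x ∈ S k`
  set M : ℤ → Set (Fin N → ℝ) := fun k => {x ∈ S k | ∀ k', k < k' → x ∉ S k'}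
  have hcover : ⋃ k, S k ⊆ ⋃ k, M k := iUnion_subset fun k x hx =>
    mem_iUnion.mpr ⟨sSup {k | x ∈ S k}, Int.csSup_mem ⟨k, hx⟩ (hbdd x),
      fun k' hk' hxk' => hk'.not_ge (le_csSup (hbdd x) hxk')⟩
  have hM : ∀ k, ∀ x ∈ M k, dcube t k x ⊆ M k := fun k x hx y hy =>
    ⟨hS k x hx.1 hy, fun k' hk' hyk' =>
      hx.2 k' hk' (hS k' y hyk' (mem_dcube_comm.mp (dcube_subset_dcube hk'.le x hy)))⟩
  have hdisj : Pairwise (Function.onFun Disjoint M) := fun k k' hne =>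
    disjoint_left.mpr fun x hx hx' => by
      rcases hne.lt_or_gt with h | h
      exacts [hx.2 k' h hx'.1, hx'.2 k h hx.1]
  have hmeas : ∀ k, MeasurableSet (M k) := fun k => measurableSet_of_forall_mem_dcube (hM k)
  calc volume (⋃ k, S k) ≤ volume (⋃ k, M k) := measure_mono hcover
    _ = ∑' k, volume (M k) := measure_iUnion hdisj hmeas
    _ ≤ ∑' k, C * volume.restrict A (M k) := ENNReal.tsum_le_tsum fun k => by
        rw [Measure.restrict_apply (hmeas k), inter_comm]
        exact volume_le_mul_volume_inter_of_forall_dcube (hM k) fun x hx => hSA k x hx.1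
    _ = C * volume (A ∩ ⋃ k, M k) := by
        rw [ENNReal.tsum_mul_left, ← measure_iUnion hdisj hmeas,
          Measure.restrict_apply (MeasurableSet.iUnion hmeas), inter_comm]
    _ ≤ C * volume A := mul_le_mul_right (measure_mono inter_subset_left) C

end DyadicPartition

section MartingaleDifferences

variable {N : ℕ} {t : Fin N → ℝ}

lemma avg_eq_of_mem_dcube (g : (Fin N → ℝ) → ℝ) {k : ℤ} {x y : Fin N → ℝ}
    (h : y ∈ dcube t k x) : avg (fun _ => t) k g y = avg (fun _ => t) k g x := by
  simp only [avg, dcube_eq_of_mem h]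

lemma mdiff_eq_of_mem_dcube (g : (Fin N → ℝ) → ℝ) {k : ℤ} {x y : Fin N → ℝ}
    (h : y ∈ dcube t (k - 1) x) : mdiff (fun _ => t) k g y = mdiff (fun _ => t) k g x := by
  simp only [mdiff, avg_eq_of_mem_dcube g h,
    avg_eq_of_mem_dcube g (dcube_subset_dcube (by omega : k - 1 ≤ k) x h)]

lemma integrableOn_mdiff_sq (g : (Fin N → ℝ) → ℝ) (k : ℤ) (x : Fin N → ℝ) :
    IntegrableOn (fun y => mdiff (fun _ => t) k g y ^ 2) (dcube t k x) := by
  have hconst : ∀ x, ∀ y ∈ dcube t (k - 1) x,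
      mdiff (fun _ => t) k g y ^ 2 = mdiff (fun _ => t) k g x ^ 2 :=
    fun x y hy => by rw [mdiff_eq_of_mem_dcube g hy]
  obtain ⟨M, hM⟩ := (finite_image_dcube hconst x).bddAbove
  refine Measure.integrableOn_of_bounded (volume_dcube_ne_top k x)
    (measurable_of_forall_mem_dcube hconst).aestronglyMeasurable (M := M) ?_
  filter_upwards [ae_restrict_mem (measurableSet_dcube k x)] with y hy
  rw [Real.norm_of_nonneg (sq_nonneg _)]
  exact hM (mem_image_of_mem _ hy)

variable (t) in
def sqDiff (f : (Fin N → ℝ) → ℝ) (k : ℤ) (x : Fin N → ℝ) : ℝ≥0∞ :=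
  ENNReal.ofReal (mdiff (fun _ => t) k f x ^ 2)

variable {f : (Fin N → ℝ) → ℝ}

lemma sqDiff_eq_of_mem_dcube {k : ℤ} {x y : Fin N → ℝ} (h : y ∈ dcube t (k - 1) x) :
    sqDiff t f k y = sqDiff t f k x := by
  rw [sqDiff, mdiff_eq_of_mem_dcube f h, sqDiff]

lemma measurable_sqDiff (k : ℤ) : Measurable (sqDiff t f k) :=
  measurable_of_forall_mem_dcube fun _ _ => sqDiff_eq_of_mem_dcube

lemma ofReal_avg_mdiff_sq (k : ℤ) (x : Fin N → ℝ) :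
    ENNReal.ofReal (avg (fun _ => t) k (fun y => mdiff (fun _ => t) k f y ^ 2) x) =
      ⨍⁻ y in dcube t k x, sqDiff t f k y ∂volume := by
  simp only [avg]
  rw [setLAverage_eq, volume_dcube, ENNReal.ofReal_div_of_pos (by positivity),
    ofReal_integral_eq_lintegral_ofReal (integrableOn_mdiff_sq f k x)
      (ae_of_all _ fun _ => sq_nonneg _)]
  rfl

lemma StildeSq_eq_tsum_setLAverage (x : Fin N → ℝ) :
    StildeSq (fun _ => t) f x = ∑' k, ⨍⁻ y in dcube t k x, sqDiff t f k y ∂volume :=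
  tsum_congr fun k => ofReal_avg_mdiff_sq k x

lemma sqDiff_le_two_pow_mul_setLAverage (k : ℤ) (x : Fin N → ℝ) :
    sqDiff t f k x ≤ 2 ^ N * ⨍⁻ y in dcube t k x, sqDiff t f k y ∂volume := by
  have hchild : ∫⁻ y in dcube t (k - 1) x, sqDiff t f k y =
      sqDiff t f k x * volume (dcube t (k - 1) x) := by
    rw [setLIntegral_congr_fun (measurableSet_dcube _ x) fun y hy => sqDiff_eq_of_mem_dcube hy,
      setLIntegral_const]
  rw [setLAverage_eq, volume_dcube_eq_two_pow_mul k x x, ← mul_div_assoc,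
    ENNReal.mul_div_mul_left _ _ (pow_ne_zero N two_ne_zero)
      (ENNReal.pow_ne_top ENNReal.ofNat_ne_top),
    ENNReal.le_div_iff_mul_le (Or.inl (volume_dcube_ne_zero _ x))
      (Or.inl (volume_dcube_ne_top _ x)), ← hchild]
  exact lintegral_mono_set (dcube_subset_dcube (by omega) x)

lemma Ssq_le_two_pow_mul_StildeSq (x : Fin N → ℝ) :
    Ssq (fun _ => t) f x ≤ 2 ^ N * StildeSq (fun _ => t) f x := by
  rw [StildeSq_eq_tsum_setLAverage, ← ENNReal.tsum_mul_left]
  exact ENNReal.tsum_le_tsum fun k => sqDiff_le_two_pow_mul_setLAverage k x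

lemma lintegral_sqrt_Ssq_le :
    ∫⁻ x, Ssq (fun _ => t) f x ^ (1 / 2 : ℝ) ≤
      2 ^ N * ∫⁻ x, StildeSq (fun _ => t) f x ^ (1 / 2 : ℝ) := by
  rw [← lintegral_const_mul' _ _ (ENNReal.pow_ne_top ENNReal.ofNat_ne_top)]
  refine lintegral_mono fun x => ?_
  calc Ssq (fun _ => t) f x ^ (1 / 2 : ℝ)
      ≤ (2 ^ N * StildeSq (fun _ => t) f x) ^ (1 / 2 : ℝ) :=
        ENNReal.rpow_le_rpow (Ssq_le_two_pow_mul_StildeSq x) (by norm_num)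
    _ = (2 ^ N) ^ (1 / 2 : ℝ) * StildeSq (fun _ => t) f x ^ (1 / 2 : ℝ) :=
        ENNReal.mul_rpow_of_nonneg _ _ (by norm_num)
    _ ≤ 2 ^ N * StildeSq (fun _ => t) f x ^ (1 / 2 : ℝ) := by
        refine mul_le_mul_left ?_ _
        calc ((2 : ℝ≥0∞) ^ N) ^ (1 / 2 : ℝ) ≤ (2 ^ N) ^ (1 : ℝ) :=
              ENNReal.rpow_le_rpow_of_exponent_le (one_le_pow₀ one_le_two) (by norm_num)
          _ = 2 ^ N := ENNReal.rpow_one _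

end MartingaleDifferences

section HardDirection

variable {N : ℕ} (t : Fin N → ℝ) (f : (Fin N → ℝ) → ℝ)

def tailSq (k : ℤ) (x : Fin N → ℝ) : ℝ≥0∞ :=
  ∑' l, (Ici k).indicator (fun l => sqDiff t f l x) l

def tailLevelSet (j k : ℤ) : Set (Fin N → ℝ) :=
  {x | tailSq t f k x ^ (1 / 2 : ℝ) ∈ Ioc ((2 : ℝ≥0∞) ^ j) (2 ^ (j + 1))}

def tailLevelCover (j k : ℤ) : Set (Fin N → ℝ) :=
  {x | (dcube t k x ∩ tailLevelSet t f j k).Nonempty}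

def sqFunSuperlevel (j : ℤ) : Set (Fin N → ℝ) :=
  {x | (2 : ℝ≥0∞) ^ j < Ssq (fun _ => t) f x ^ (1 / 2 : ℝ)}

def levelSqFun (j : ℤ) (x : Fin N → ℝ) : ℝ≥0∞ :=
  ∑' k, ⨍⁻ y in dcube t k x, (tailLevelSet t f j k).indicator (sqDiff t f k) y ∂volume

variable {t f}

lemma sqDiff_le_tailSq (k : ℤ) (x : Fin N → ℝ) : sqDiff t f k x ≤ tailSq t f k x :=
  calc sqDiff t f k x = (Ici k).indicator (fun l => sqDiff t f l x) k :=
        (indicator_of_mem self_mem_Ici fun l => sqDiff t f l x).symm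
    _ ≤ tailSq t f k x := ENNReal.le_tsum k

lemma tailSq_le_Ssq (k : ℤ) (x : Fin N → ℝ) : tailSq t f k x ≤ Ssq (fun _ => t) f x :=
  ENNReal.tsum_le_tsum fun l => indicator_le_self _ _ l

lemma tailSq_eq_of_mem_dcube {k : ℤ} {x y : Fin N → ℝ} (h : y ∈ dcube t (k - 1) x) :
    tailSq t f k y = tailSq t f k x :=
  tsum_congr fun l => by
    by_cases hl : l ∈ Ici k
    · simp only [indicator_of_mem hl]
      exact sqDiff_eq_of_mem_dcube (dcube_subset_dcube (by rw [mem_Ici] at hl; omega) x h)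
    · simp only [indicator_of_notMem hl]

lemma measurable_tailSq (k : ℤ) : Measurable (tailSq t f k) :=
  measurable_of_forall_mem_dcube fun _ _ => tailSq_eq_of_mem_dcube

lemma measurable_Ssq : Measurable (Ssq (fun _ => t) f) :=
  Measurable.tsum fun k => measurable_sqDiff k

lemma measurableSet_tailLevelSet (j k : ℤ) : MeasurableSet (tailLevelSet t f j k) :=
  (measurable_tailSq k).pow_const _ measurableSet_Ioc

lemma measurableSet_sqFunSuperlevel (j : ℤ) : MeasurableSet (sqFunSuperlevel t f j) :=
  measurable_Ssq.pow_const _ measurableSet_Ioi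

lemma tailLevelSet_subset_sqFunSuperlevel (j k : ℤ) :
    tailLevelSet t f j k ⊆ sqFunSuperlevel t f j :=
  fun x hx => (show _ < _ from hx.1).trans_le
    (ENNReal.rpow_le_rpow (tailSq_le_Ssq k x) (by norm_num))

lemma dcube_subset_tailLevelSet {j k : ℤ} {x : Fin N → ℝ} (hx : x ∈ tailLevelSet t f j k) :
    dcube t (k - 1) x ⊆ tailLevelSet t f j k := fun y hy => by
  rw [tailLevelSet, mem_ofPred_eq, tailSq_eq_of_mem_dcube hy]
  exact hx

lemma dcube_subset_tailLevelCover {j k : ℤ} {x : Fin N → ℝ} (hx : x ∈ tailLevelCover t f j k) :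
    dcube t k x ⊆ tailLevelCover t f j k := fun y hy => by
  change (dcube t k y ∩ _).Nonempty
  rwa [dcube_eq_of_mem hy]

lemma measurable_levelSqFun (j : ℤ) : Measurable (levelSqFun t f j) :=
  Measurable.tsum fun k => measurable_setLAverage_dcube k _

lemma tsum_indicator_tailLevelSet {k : ℤ} {x : Fin N → ℝ} (hx : tailSq t f k x ≠ ∞) :
    ∑' j, (tailLevelSet t f j k).indicator (sqDiff t f k) x = sqDiff t f k x := by
  rcases eq_or_ne (tailSq t f k x) 0 with h₀ | h₀
  · have hzero : sqDiff t f k x = 0 := nonpos_iff_eq_zero.mp (h₀ ▸ sqDiff_le_tailSq k x)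
    simp [hzero]
  obtain ⟨j₀, hj₀⟩ := ENNReal.exists_mem_Ioc_zpow (x := tailSq t f k x ^ (1 / 2 : ℝ))
    (ENNReal.rpow_pos (pos_iff_ne_zero.mpr h₀) hx).ne'
    (ENNReal.rpow_ne_top_of_nonneg (by norm_num) hx) ENNReal.one_lt_two ENNReal.ofNat_ne_top
  rw [tsum_eq_single j₀ fun j hj => indicator_of_notMem (s := tailLevelSet t f j k)
    (fun hxj => hj (eq_of_mem_Ioc_two_zpow hxj hj₀)) _,
    indicator_of_mem (s := tailLevelSet t f j₀ k) hj₀]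

lemma StildeSq_eq_tsum_levelSqFun (hfin : ∀ᵐ y, Ssq (fun _ => t) f y ≠ ∞) (x : Fin N → ℝ) :
    StildeSq (fun _ => t) f x = ∑' j, levelSqFun t f j x := by
  rw [StildeSq_eq_tsum_setLAverage]
  calc ∑' k, ⨍⁻ y in dcube t k x, sqDiff t f k y ∂volume
      = ∑' k, ⨍⁻ y in dcube t k x,
          ∑' j, (tailLevelSet t f j k).indicator (sqDiff t f k) y ∂volume :=
        tsum_congr fun k => laverage_congr <| ae_restrict_of_ae <| hfin.mono fun y hy =>
          (tsum_indicator_tailLevelSet (ne_top_of_le_ne_top hy (tailSq_le_Ssq k y))).symm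
    _ = ∑' k, ∑' j, ⨍⁻ y in dcube t k x,
          (tailLevelSet t f j k).indicator (sqDiff t f k) y ∂volume :=
        tsum_congr fun k => laverage_tsum fun j =>
          ((measurable_sqDiff k).indicator (measurableSet_tailLevelSet j k)).aemeasurable
    _ = ∑' j, levelSqFun t f j x := ENNReal.tsum_comm

lemma tsum_indicator_tailLevelSet_le (j : ℤ) (x : Fin N → ℝ) :
    ∑' k, (tailLevelSet t f j k).indicator (sqDiff t f k) x ≤
      (sqFunSuperlevel t f j).indicator (fun _ => (2 ^ (j + 1)) ^ 2) x := by
  by_cases hx : x ∈ sqFunSuperlevel t f j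
  · rw [indicator_of_mem hx]
    -- the whole sum is dominated by the tail at the smallest `k` with `x ∈ tailLevelSet t f j k`
    exact tsum_indicator_le_of_tail_le (K := {k | x ∈ tailLevelSet t f j k})
      (g := fun k => sqDiff t f k x) fun k hk => rpow_half_le_iff.mp hk.2
  · rw [indicator_of_notMem hx]
    refine (ENNReal.tsum_eq_zero.mpr fun k => ?_).le
    exact indicator_of_notMem (fun hk => hx (tailLevelSet_subset_sqFunSuperlevel j k hk)) _

lemma lintegral_levelSqFun_le (j : ℤ) :
    ∫⁻ x, levelSqFun t f j x ≤ (2 ^ (j + 1)) ^ 2 * volume (sqFunSuperlevel t f j) := by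
  have hmeas : ∀ k, Measurable ((tailLevelSet t f j k).indicator (sqDiff t f k)) :=
    fun k => (measurable_sqDiff k).indicator (measurableSet_tailLevelSet j k)
  calc ∫⁻ x, levelSqFun t f j x
      = ∑' k, ∫⁻ y, (tailLevelSet t f j k).indicator (sqDiff t f k) y := by
        unfold levelSqFun
        rw [lintegral_tsum fun k => (measurable_setLAverage_dcube k _).aemeasurable]
        exact tsum_congr fun k => lintegral_setLAverage_dcube k _
    _ = ∫⁻ y, ∑' k, (tailLevelSet t f j k).indicator (sqDiff t f k) y :=
        (lintegral_tsum fun k => (hmeas k).aemeasurable).symm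
    _ ≤ ∫⁻ y, (sqFunSuperlevel t f j).indicator (fun _ => (2 ^ (j + 1)) ^ 2) y :=
        lintegral_mono fun y => tsum_indicator_tailLevelSet_le j y
    _ = (2 ^ (j + 1)) ^ 2 * volume (sqFunSuperlevel t f j) :=
        lintegral_indicator_const (measurableSet_sqFunSuperlevel j) _

lemma levelSqFun_eq_zero {j : ℤ} {x : Fin N → ℝ} (hx : x ∉ ⋃ k, tailLevelCover t f j k) :
    levelSqFun t f j x = 0 := by
  refine ENNReal.tsum_eq_zero.mpr fun k => ?_
  rw [setLAverage_eq, setLIntegral_congr_fun (g := fun _ => 0) (measurableSet_dcube k x)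
    fun y hy => indicator_of_notMem (fun hyJ => hx (mem_iUnion.mpr ⟨k, y, hy, hyJ⟩)) _,
    lintegral_zero, ENNReal.zero_div]

lemma volume_dcube_le_of_mem_tailLevelCover {j k : ℤ} {x : Fin N → ℝ}
    (hx : x ∈ tailLevelCover t f j k) :
    volume (dcube t k x) ≤ 2 ^ N * volume (sqFunSuperlevel t f j ∩ dcube t k x) := by
  obtain ⟨y, hyx, hyJ⟩ := hx
  rw [volume_dcube_eq_two_pow_mul k x y]
  refine mul_le_mul_right (measure_mono (subset_inter ?_ ?_)) _
  · exact (dcube_subset_tailLevelSet hyJ).trans (tailLevelSet_subset_sqFunSuperlevel j k)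
  · rw [← dcube_eq_of_mem hyx]
    exact dcube_subset_dcube (by omega) y

lemma lintegral_sqrt_levelSqFun_le (hN : 0 < N) (j : ℤ) :
    ∫⁻ x, levelSqFun t f j x ^ (1 / 2 : ℝ) ≤
      (2 ^ N + 4) * (2 ^ j * volume (sqFunSuperlevel t f j)) := by
  have h2j₀ : (2 : ℝ≥0∞) ^ j ≠ 0 := (ENNReal.zpow_pos two_ne_zero ENNReal.ofNat_ne_top j).ne'
  have h2j : (2 : ℝ≥0∞) ^ j ≠ ∞ := ENNReal.zpow_ne_top two_ne_zero ENNReal.ofNat_ne_top j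
  rcases eq_or_ne (volume (sqFunSuperlevel t f j)) ∞ with hΩ | hΩ
  · rw [hΩ, ENNReal.mul_top h2j₀, ENNReal.mul_top (by positivity)]
    exact le_top
  set B := ⋃ k, tailLevelCover t f j k
  have hB : MeasurableSet B := MeasurableSet.iUnion fun k =>
    measurableSet_of_forall_mem_dcube fun _ => dcube_subset_tailLevelCover
  have hvolB : volume B ≤ 2 ^ N * volume (sqFunSuperlevel t f j) :=
    volume_iUnion_le_of_forall_dcube hN (ENNReal.pow_ne_top ENNReal.ofNat_ne_top) hΩ
      (fun _ _ => dcube_subset_tailLevelCover) fun _ _ => volume_dcube_le_of_mem_tailLevelCover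
  calc ∫⁻ x, levelSqFun t f j x ^ (1 / 2 : ℝ)
      ≤ ∫⁻ x, B.indicator (fun _ => 2 ^ j) x + levelSqFun t f j x / 2 ^ j :=
        lintegral_mono fun x => by
          by_cases hx : x ∈ B
          · rw [indicator_of_mem hx]
            exact rpow_half_le_add_div _ h2j₀ h2j
          · rw [indicator_of_notMem hx, levelSqFun_eq_zero hx,
              ENNReal.zero_rpow_of_pos (by norm_num)]
            exact zero_le
    _ = 2 ^ j * volume B + (∫⁻ x, levelSqFun t f j x) / 2 ^ j := by
        simp only [div_eq_mul_inv]
        rw [lintegral_add_left (measurable_const.indicator hB), lintegral_indicator_const hB,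
          lintegral_mul_const _ (measurable_levelSqFun j)]
    _ ≤ 2 ^ j * (2 ^ N * volume (sqFunSuperlevel t f j)) +
          (2 ^ (j + 1)) ^ 2 * volume (sqFunSuperlevel t f j) / 2 ^ j :=
        add_le_add (mul_le_mul_right hvolB _)
          (ENNReal.div_le_div_right (lintegral_levelSqFun_le j) _)
    _ = (2 ^ N + 4) * (2 ^ j * volume (sqFunSuperlevel t f j)) := by
        rw [ENNReal.zpow_add two_ne_zero ENNReal.ofNat_ne_top, zpow_one,
          show ((2 : ℝ≥0∞) ^ j * 2) ^ 2 * volume (sqFunSuperlevel t f j) =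
            4 * volume (sqFunSuperlevel t f j) * 2 ^ j * 2 ^ j by ring,
          mul_comm, ENNReal.mul_div_cancel_right h2j₀ h2j]
        ring

lemma lintegral_sqrt_StildeSq_le (hN : 0 < N) :
    ∫⁻ x, StildeSq (fun _ => t) f x ^ (1 / 2 : ℝ) ≤
      2 * (2 ^ N + 4) * ∫⁻ x, Ssq (fun _ => t) f x ^ (1 / 2 : ℝ) := by
  rcases eq_or_ne (∫⁻ x, Ssq (fun _ => t) f x ^ (1 / 2 : ℝ)) ∞ with hS | hS
  · rw [hS, ENNReal.mul_top (by positivity)]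
    exact le_top
  have hfin : ∀ᵐ y, Ssq (fun _ => t) f y ≠ ∞ :=
    (ae_lt_top (measurable_Ssq.pow_const _) hS).mono fun y hy =>
      ((ENNReal.rpow_lt_top_iff_of_pos (by norm_num)).mp hy).ne
  calc ∫⁻ x, StildeSq (fun _ => t) f x ^ (1 / 2 : ℝ)
      = ∫⁻ x, (∑' j, levelSqFun t f j x) ^ (1 / 2 : ℝ) := by
        simp only [StildeSq_eq_tsum_levelSqFun hfin]
    _ ≤ ∫⁻ x, ∑' j, levelSqFun t f j x ^ (1 / 2 : ℝ) := lintegral_mono fun x => rpow_half_tsum_le _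
    _ = ∑' j, ∫⁻ x, levelSqFun t f j x ^ (1 / 2 : ℝ) :=
        lintegral_tsum fun j => ((measurable_levelSqFun j).pow_const _).aemeasurable
    _ ≤ ∑' j : ℤ, (2 ^ N + 4) * (2 ^ j * volume (sqFunSuperlevel t f j)) :=
        ENNReal.tsum_le_tsum fun j => lintegral_sqrt_levelSqFun_le hN j
    _ = (2 ^ N + 4) * ∑' j : ℤ, 2 ^ j * volume (sqFunSuperlevel t f j) := ENNReal.tsum_mul_left
    _ ≤ (2 ^ N + 4) * (2 * ∫⁻ x, Ssq (fun _ => t) f x ^ (1 / 2 : ℝ)) :=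
        mul_le_mul_right (tsum_two_zpow_mul_measure_lt_le volume (measurable_Ssq.pow_const _)) _
    _ = 2 * (2 ^ N + 4) * ∫⁻ x, Ssq (fun _ => t) f x ^ (1 / 2 : ℝ) := by ring

end HardDirection

/-- **Equivalence of the two dyadic square-function norms**: for every dyadic lattice
`t + 𝒟₀` in `ℝ^N` and every `f ∈ L¹_loc`, `C⁻¹ ‖S_𝒟 f‖₁ ≤ ‖S̃_𝒟 f‖₁ ≤ C ‖S_𝒟 f‖₁` with `C`
depending only on `N`. -/
theorem square_function_norms_equiv (N : ℕ) (hN : 0 < N) :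
    ∃ C : ℝ, 0 < C ∧
      ∀ (t : Fin N → ℝ) (f : (Fin N → ℝ) → ℝ), LocallyIntegrable f volume →
        (∫⁻ x, (Ssq (fun _ => t) f x) ^ (1 / 2 : ℝ)) ≤
            ENNReal.ofReal C * ∫⁻ x, (StildeSq (fun _ => t) f x) ^ (1 / 2 : ℝ) ∧
        (∫⁻ x, (StildeSq (fun _ => t) f x) ^ (1 / 2 : ℝ)) ≤
            ENNReal.ofReal C * ∫⁻ x, (Ssq (fun _ => t) f x) ^ (1 / 2 : ℝ) := by
  refine ⟨2 * (2 ^ N + 4), by positivity, fun t f _ => ?_⟩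
  have hC : ENNReal.ofReal (2 * (2 ^ N + 4)) = 2 * (2 ^ N + 4) := by
    rw [ENNReal.ofReal_mul zero_le_two, ENNReal.ofReal_add (by positivity) zero_le_four,
      ENNReal.ofReal_pow zero_le_two, ENNReal.ofReal_ofNat, ENNReal.ofReal_ofNat]
  have h2N : (2 : ℝ≥0∞) ^ N ≤ 2 * (2 ^ N + 4) :=
    le_self_add.trans (le_mul_of_one_le_left' one_le_two)
  rw [hC]
  exact ⟨lintegral_sqrt_Ssq_le.trans (mul_le_mul_left h2N _), lintegral_sqrt_StildeSq_le hN⟩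

end Treil
end
end
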